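/- For each fixed z ∈ ℝ, α ≥ 0, and b ∈ ℝ, the function τ ↦ (η(b + τz; ατ) − b)², defined for τ > 0, equals τ²·(η(b/τ + z; α) − b/τ)², and the function s ↦ s·(η(b·s^{-1/2}+z; α) − b·s^{-1/2})² (with s = τ²) is nondecreasing in s > 0. -/

import Mathlib

/-!
Scaling is the joint homogeneity of `η`. For monotonicity, `η(x; θ)` is the point of
`[x - θ, x + θ]` closest to `0`, so `η(b + τz; ατ) - b = max (τ(z - α)) (min (τ(z + α)) (-b))`.
Each of `τ(z - α)`, `τ(z + α)`, `-b` only moves away from `0` as `τ` grows (its value at `τ` lies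
between `0` and its value at `τ' ≥ τ`), and this property survives `min` and `max`.
-/

noncomputable def softThresh (x θ : ℝ) : ℝ :=
  if x > θ then x - θ else if x < -θ then x + θ else 0

open Set
open scoped Interval

theorem softThresh_mul_mul {c : ℝ} (hc : 0 ≤ c) (x θ : ℝ) :
    softThresh (c * x) (c * θ) = c * softThresh x θ := by
  rcases hc.eq_or_lt with rfl | hc
  · simp [softThresh]
  have h₁ : c * x > c * θ ↔ x > θ := mul_lt_mul_iff_right₀ hc
  have h₂ : c * x < -(c * θ) ↔ x < -θ := by rw [← mul_neg]; exact mul_lt_mul_iff_right₀ hc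
  simp only [softThresh, h₁, h₂]
  split_ifs <;> ring

theorem softThresh_eq_max_min {θ : ℝ} (hθ : 0 ≤ θ) (x : ℝ) :
    softThresh x θ = max (x - θ) (min (x + θ) 0) := by
  unfold softThresh
  split_ifs <;> grind

theorem min_mem_uIcc_zero {a a' b b' : ℝ} (ha : a ∈ [[0, a']]) (hb : b ∈ [[0, b']]) :
    min a b ∈ [[0, min a' b']] := by
  simp only [mem_uIcc] at *
  grind

theorem max_mem_uIcc_zero {a a' b b' : ℝ} (ha : a ∈ [[0, a']]) (hb : b ∈ [[0, b']]) :
    max a b ∈ [[0, max a' b']] := by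
  simp only [mem_uIcc] at *
  grind

theorem mul_mem_uIcc_zero {t t' : ℝ} (ht : 0 ≤ t) (htt' : t ≤ t') (a : ℝ) :
    t * a ∈ [[0, t' * a]] := by
  simp only [mem_uIcc]
  rcases le_total 0 a with ha | ha
  · exact Or.inl ⟨by positivity, by nlinarith⟩
  · exact Or.inr ⟨by nlinarith, by nlinarith⟩

theorem softThresh_add_mul_sub_eq {α τ : ℝ} (hα : 0 ≤ α) (hτ : 0 ≤ τ) (b z : ℝ) :
    softThresh (b + τ * z) (α * τ) - b = max (τ * (z - α)) (min (τ * (z + α)) (-b)) := by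
  rw [softThresh_eq_max_min (mul_nonneg hα hτ), ← max_sub_sub_right, ← min_sub_sub_right]
  ring_nf

theorem sq_softThresh_add_mul_sub_le {α τ τ' : ℝ} (hα : 0 ≤ α) (hτ : 0 ≤ τ) (hττ' : τ ≤ τ')
    (b z : ℝ) :
    (softThresh (b + τ * z) (α * τ) - b) ^ 2 ≤ (softThresh (b + τ' * z) (α * τ') - b) ^ 2 := by
  have hmem : softThresh (b + τ * z) (α * τ) - b ∈
      [[0, softThresh (b + τ' * z) (α * τ') - b]] := by
    rw [softThresh_add_mul_sub_eq hα hτ, softThresh_add_mul_sub_eq hα (hτ.trans hττ')]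
    exact max_mem_uIcc_zero (mul_mem_uIcc_zero hτ hττ' _)
      (min_mem_uIcc_zero (mul_mem_uIcc_zero hτ hττ' _) right_mem_uIcc)
  simpa using sq_le_sq.mpr (abs_sub_left_of_mem_uIcc hmem)

theorem softThresh_add_mul_sub_eq_mul {τ : ℝ} (hτ : 0 < τ) (α b z : ℝ) :
    softThresh (b + τ * z) (α * τ) - b = τ * (softThresh (b / τ + z) α - b / τ) := by
  have hx : b + τ * z = τ * (b / τ + z) := by field_simp
  rw [hx, mul_comm α, softThresh_mul_mul hτ.le, mul_sub, mul_div_cancel₀ b hτ.ne']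

/-- Scaling identity and monotonicity in the noise level: for fixed `z`, `α ≥ 0`, `b`,
`(η(b+τz;ατ) − b)² = τ² (η(b/τ+z;α) − b/τ)²` for `τ > 0`, and
`s ↦ s (η(b/√s + z; α) − b/√s)²` is nondecreasing on `(0,∞)`. -/
theorem softThresh_scaling_and_monotone (z α b : ℝ) (hα : 0 ≤ α) :
    (∀ τ : ℝ, 0 < τ →
      (softThresh (b + τ * z) (α * τ) - b)^2 =
        τ^2 * (softThresh (b / τ + z) α - b / τ)^2) ∧
    (∀ s₁ s₂ : ℝ, 0 < s₁ → s₁ ≤ s₂ →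
      s₁ * (softThresh (b / Real.sqrt s₁ + z) α - b / Real.sqrt s₁)^2 ≤
      s₂ * (softThresh (b / Real.sqrt s₂ + z) α - b / Real.sqrt s₂)^2) := by
  have scaling : ∀ τ : ℝ, 0 < τ →
      (softThresh (b + τ * z) (α * τ) - b)^2 = τ^2 * (softThresh (b / τ + z) α - b / τ)^2 :=
    fun τ hτ => by rw [softThresh_add_mul_sub_eq_mul hτ, mul_pow]
  have scaling_sqrt : ∀ s : ℝ, 0 < s →
      s * (softThresh (b / Real.sqrt s + z) α - b / Real.sqrt s)^2 =
        (softThresh (b + Real.sqrt s * z) (α * Real.sqrt s) - b)^2 :=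
    fun s hs => by rw [scaling _ (Real.sqrt_pos.2 hs), Real.sq_sqrt hs.le]
  refine ⟨scaling, fun s₁ s₂ hs₁ hs => ?_⟩
  rw [scaling_sqrt s₁ hs₁, scaling_sqrt s₂ (hs₁.trans_le hs)]
  exact sq_softThresh_add_mul_sub_le hα (Real.sqrt_nonneg _) (Real.sqrt_le_sqrt hs) b z
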